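/- Fix δ ∈ (0, 1/2], κ ∈ (0,1), α > 0, M > 2/δ, β ≤ 1 and integer k ≥ 3. For σ, γ ∈ (0,1) let ν̃_V¹ := (e^{γ+1−β}/log k) · (pushforward of the law of α·Poisson(κ) under the map y ↦ −log(e^{−y} + σ)), and let Z̃₁ := α·N₀ + Σ_{i=1}^{N_r} Y_i with N₀ ∼ Poisson(κ/2), N_r ∼ Poisson(ν_r^{≠}(ℝ)), Y_i i.i.d. with law ν_r^{≠}/ν_r^{≠}(ℝ), all independent. Then for any y₁, y₂ with M ≤ y₁ < y₂, liminf as (σ,γ) → (0,0) of (ν̃_V¹ * μ_{−Z̃₁})([y₁, y₂]) is at least (e^{−κ/2}/(2 log k)) · P( α·Poisson(κ) ∈ (y₁, y₂) ), where μ_{−Z̃₁} is the law of −Z̃₁. -/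

import Mathlib

open MeasureTheory Set Real
open scoped ENNReal

/-- The measure `ν_r(dy) = (γ/y²) e^{δy} 1{y > M} dy`. -/
noncomputable def nuR (δ γ M : ℝ) : Measure ℝ :=
  volume.withDensity fun y =>
    ENNReal.ofReal (if M < y then γ / y ^ 2 * Real.exp (δ * y) else 0)

/-- The measure `ν_r^{≠}(dy) = (e^y + (k−1)^{−1})^{−1} ν_r(dy)`. -/
noncomputable def nuRNe (δ γ M : ℝ) (k : ℕ) : Measure ℝ :=
  volume.withDensity fun y =>
    ENNReal.ofReal (if M < y then
      (γ / y ^ 2 * Real.exp (δ * y)) / (Real.exp y + 1 / ((k : ℝ) - 1)) else 0)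

/-- The convolution of two measures on `ℝ` (law of the sum of independent samples). -/
noncomputable def mconv (μ ν : Measure ℝ) : Measure ℝ :=
  μ.bind fun x => ν.map (x + ·)

/-- The `n`-fold convolution of a measure on `ℝ`. -/
noncomputable def nconv (μ : Measure ℝ) : ℕ → Measure ℝ
  | 0 => Measure.dirac 0
  | n + 1 => mconv μ (nconv μ n)

/-- `Pois(λ) ⊗ μ`: the law of `Σ_{i=1}^N Y_i` where `N ∼ Poisson(λ)` and the `Y_i`
are i.i.d. with (probability) law `μ`, independent of `N`. -/
noncomputable def compoundPoisson (lam : ℝ) (μ : Measure ℝ) : Measure ℝ :=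
  Measure.sum fun n : ℕ =>
    ENNReal.ofReal (Real.exp (-lam) * lam ^ n / n.factorial) • nconv μ n

/-- The law of `α · N` where `N ∼ Poisson(κ)`. -/
noncomputable def scaledPoissonLaw (κ α : ℝ) : Measure ℝ :=
  Measure.sum fun n : ℕ =>
    ENNReal.ofReal (Real.exp (-κ) * κ ^ n / n.factorial) • Measure.dirac (α * (n : ℝ))

/-- The law of `Z̃₁ := α·N₀ + Σ_{i=1}^{N_r} Y_i`, where `N₀ ∼ Poisson(κ/2)`,
`N_r ∼ Poisson(ν_r^{≠}(ℝ))` and the `Y_i` are i.i.d. with law `ν_r^{≠}/ν_r^{≠}(ℝ)`,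
all independent. -/
noncomputable def Z1Law (δ γ κ α M : ℝ) (k : ℕ) : Measure ℝ :=
  mconv (scaledPoissonLaw (κ / 2) α)
    (compoundPoisson ((nuRNe δ γ M k) Set.univ).toReal
      ((nuRNe δ γ M k Set.univ)⁻¹ • nuRNe δ γ M k))

/-! ### Auxiliary lemmas -/

lemma mconv_apply (μ ν : Measure ℝ) [SFinite ν] {s : Set ℝ} (hs : MeasurableSet s) :
    mconv μ ν s = ∫⁻ x, ν {y | x + y ∈ s} ∂μ := by
  have hker : Measurable fun x : ℝ => ν.map (x + ·) := by
    rw [Measure.measurable_measure]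
    intro t ht
    have h1 : ∀ x : ℝ, (ν.map (x + ·)) t = ν (Prod.mk x ⁻¹' {p : ℝ × ℝ | p.1 + p.2 ∈ t}) := by
      intro x
      rw [Measure.map_apply (measurable_const_add x) ht]
      rfl
    simp_rw [h1]
    exact measurable_measure_prodMk_left ((measurable_fst.add measurable_snd) ht)
  rw [mconv, Measure.bind_apply hs hker.aemeasurable]
  refine lintegral_congr fun x => ?_
  rw [Measure.map_apply (measurable_const_add x) hs]
  rfl

lemma mconv_univ (μ ν : Measure ℝ) [SFinite ν] :
    mconv μ ν Set.univ = ν Set.univ * μ Set.univ := by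
  rw [mconv_apply μ ν MeasurableSet.univ]
  simp [lintegral_const]

lemma le_mconv (μ ν : Measure ℝ) [SFinite ν] {s : Set ℝ} (hs : MeasurableSet s) :
    ν {0} * μ s ≤ mconv μ ν s := by
  rw [mconv_apply μ ν hs, ← lintegral_indicator_const hs (ν {0})]
  refine lintegral_mono fun x => ?_
  by_cases hx : x ∈ s
  · simp only [Set.indicator_of_mem hx]
    refine measure_mono fun y hy => ?_
    simp only [Set.mem_singleton_iff] at hy
    subst hy
    simpa using hx
  · simp [Set.indicator_of_notMem hx]

lemma mconv_smul_left (c : ℝ≥0∞) (μ ν : Measure ℝ) [SFinite ν] {s : Set ℝ}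
    (hs : MeasurableSet s) : mconv (c • μ) ν s = c * mconv μ ν s := by
  rw [mconv_apply _ ν hs, mconv_apply μ ν hs, lintegral_smul_measure, smul_eq_mul]

lemma nconv_univ_le (μ : Measure ℝ) (h : μ Set.univ ≤ 1) (n : ℕ) :
    nconv μ n Set.univ ≤ 1 := by
  induction n with
  | zero => simp [nconv]
  | succ n ih =>
    haveI : IsFiniteMeasure (nconv μ n) := ⟨lt_of_le_of_lt ih ENNReal.one_lt_top⟩
    rw [show nconv μ (n+1) = mconv μ (nconv μ n) from rfl,
      mconv_apply μ (nconv μ n) MeasurableSet.univ]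
    have h2 : ∀ x : ℝ, {y : ℝ | x + y ∈ Set.univ} = Set.univ := fun x => by simp
    simp_rw [h2, lintegral_const]
    calc nconv μ n Set.univ * μ Set.univ ≤ 1 * 1 := mul_le_mul' ih h
    _ = 1 := one_mul 1

lemma poisson_mix_univ_ne_top (lam : ℝ) (hlam : 0 ≤ lam) (m : ℕ → Measure ℝ)
    (hm : ∀ n, m n Set.univ ≤ 1) :
    (Measure.sum fun n : ℕ =>
      ENNReal.ofReal (Real.exp (-lam) * lam ^ n / n.factorial) • m n) Set.univ ≠ ∞ := by
  rw [Measure.sum_apply _ MeasurableSet.univ]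
  have hsum : Summable fun n : ℕ => Real.exp (-lam) * lam ^ n / n.factorial := by
    simp_rw [mul_div_assoc]
    exact (Real.summable_pow_div_factorial lam).mul_left _
  have hb : (∑' n : ℕ, (ENNReal.ofReal (Real.exp (-lam) * lam ^ n / n.factorial) • m n) Set.univ)
      ≤ ∑' n : ℕ, ENNReal.ofReal (Real.exp (-lam) * lam ^ n / n.factorial) := by
    refine ENNReal.tsum_le_tsum fun n => ?_
    rw [Measure.smul_apply, smul_eq_mul]
    calc _ ≤ ENNReal.ofReal (Real.exp (-lam) * lam ^ n / n.factorial) * 1 :=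
        mul_le_mul_right (hm n) _
    _ = _ := mul_one _
  refine ne_top_of_le_ne_top ?_ hb
  rw [← ENNReal.ofReal_tsum_of_nonneg (fun n => by positivity) hsum]
  exact ENNReal.ofReal_ne_top

lemma poisson_mix_univ_le_one (lam : ℝ) (hlam : 0 ≤ lam) (m : ℕ → Measure ℝ)
    (hm : ∀ n, m n Set.univ ≤ 1) :
    (Measure.sum fun n : ℕ =>
      ENNReal.ofReal (Real.exp (-lam) * lam ^ n / n.factorial) • m n) Set.univ ≤ 1 := by
  rw [Measure.sum_apply _ MeasurableSet.univ]
  have hsum : Summable fun n : ℕ => Real.exp (-lam) * lam ^ n / n.factorial := by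
    simp_rw [mul_div_assoc]
    exact (Real.summable_pow_div_factorial lam).mul_left _
  have hexp : (∑' n : ℕ, lam ^ n / (n.factorial : ℝ)) = Real.exp lam := by
    rw [Real.exp_eq_exp_ℝ, NormedSpace.exp_eq_tsum_div]
  have htsum : (∑' n : ℕ, Real.exp (-lam) * lam ^ n / n.factorial) = 1 := by
    simp_rw [mul_div_assoc]
    rw [tsum_mul_left, hexp, ← Real.exp_add]
    simp
  calc (∑' n : ℕ, (ENNReal.ofReal (Real.exp (-lam) * lam ^ n / n.factorial) • m n) Set.univ)
      ≤ ∑' n : ℕ, ENNReal.ofReal (Real.exp (-lam) * lam ^ n / n.factorial) := by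
        refine ENNReal.tsum_le_tsum fun n => ?_
        rw [Measure.smul_apply, smul_eq_mul]
        calc _ ≤ ENNReal.ofReal (Real.exp (-lam) * lam ^ n / n.factorial) * 1 :=
            mul_le_mul_right (hm n) _
        _ = _ := mul_one _
    _ = ENNReal.ofReal (∑' n : ℕ, Real.exp (-lam) * lam ^ n / n.factorial) :=
        (ENNReal.ofReal_tsum_of_nonneg (fun n => by positivity) hsum).symm
    _ = 1 := by rw [htsum]; simp

lemma scaledPoissonLaw_univ_le_one (κ α : ℝ) (hκ : 0 ≤ κ) :
    scaledPoissonLaw κ α Set.univ ≤ 1 := by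
  unfold scaledPoissonLaw
  exact poisson_mix_univ_le_one κ hκ _ fun n => by simp

lemma compoundPoisson_univ_le_one (lam : ℝ) (hlam : 0 ≤ lam) (μ : Measure ℝ)
    (h : μ Set.univ ≤ 1) : compoundPoisson lam μ Set.univ ≤ 1 := by
  unfold compoundPoisson
  exact poisson_mix_univ_le_one lam hlam _ fun n => nconv_univ_le μ h n

lemma le_poisson_mix_zero (lam : ℝ) (m : ℕ → Measure ℝ) (hm : m 0 {0} = 1) :
    ENNReal.ofReal (Real.exp (-lam)) ≤
      (Measure.sum fun n : ℕ =>
        ENNReal.ofReal (Real.exp (-lam) * lam ^ n / n.factorial) • m n) {0} := by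
  rw [Measure.sum_apply _ (measurableSet_singleton 0)]
  have h0 : (ENNReal.ofReal (Real.exp (-lam) * lam ^ 0 / Nat.factorial 0) • m 0) {0}
      = ENNReal.ofReal (Real.exp (-lam)) := by
    rw [Measure.smul_apply, smul_eq_mul, hm]
    simp
  calc ENNReal.ofReal (Real.exp (-lam)) = _ := h0.symm
  _ ≤ _ := ENNReal.le_tsum 0

lemma inv_smul_univ_le_one (ν : Measure ℝ) : ((ν Set.univ)⁻¹ • ν) Set.univ ≤ 1 := by
  rw [Measure.smul_apply, smul_eq_mul]
  rcases eq_or_ne (ν Set.univ) 0 with h | h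
  · simp [h]
  rcases eq_or_ne (ν Set.univ) ∞ with h' | h'
  · simp [h']
  rw [ENNReal.inv_mul_cancel h h']

lemma scaledPoissonLaw_univ_ne_top (κ α : ℝ) (hκ : 0 ≤ κ) :
    scaledPoissonLaw κ α Set.univ ≠ ∞ := by
  unfold scaledPoissonLaw
  exact poisson_mix_univ_ne_top κ hκ _ fun n => by simp

lemma compoundPoisson_univ_ne_top (lam : ℝ) (hlam : 0 ≤ lam) (μ : Measure ℝ)
    (h : μ Set.univ ≤ 1) : compoundPoisson lam μ Set.univ ≠ ∞ := by
  unfold compoundPoisson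
  exact poisson_mix_univ_ne_top lam hlam _ fun n => nconv_univ_le μ h n

lemma le_scaledPoissonLaw_zero (κ α : ℝ) :
    ENNReal.ofReal (Real.exp (-κ)) ≤ scaledPoissonLaw κ α {0} := by
  unfold scaledPoissonLaw
  refine le_poisson_mix_zero κ _ ?_
  rw [Nat.cast_zero, mul_zero]
  exact Measure.dirac_apply_of_mem (Set.mem_singleton (0:ℝ))

lemma le_compoundPoisson_zero (lam : ℝ) (μ : Measure ℝ) :
    ENNReal.ofReal (Real.exp (-lam)) ≤ compoundPoisson lam μ {0} := by
  unfold compoundPoisson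
  refine le_poisson_mix_zero lam _ ?_
  show Measure.dirac (0:ℝ) {0} = 1
  exact Measure.dirac_apply_of_mem (Set.mem_singleton (0:ℝ))

lemma spl_compare (κ α : ℝ) {s t : Set ℝ} (hs : MeasurableSet s) (ht : MeasurableSet t)
    (h : ∀ n : ℕ, α * n ∈ s → α * n ∈ t) :
    scaledPoissonLaw κ α s ≤ scaledPoissonLaw κ α t := by
  unfold scaledPoissonLaw
  rw [Measure.sum_apply _ hs, Measure.sum_apply _ ht]
  refine ENNReal.tsum_le_tsum fun n => ?_
  simp only [Measure.smul_apply, smul_eq_mul]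
  refine mul_le_mul_right ?_ _
  rw [Measure.dirac_apply' _ hs, Measure.dirac_apply' _ ht]
  by_cases hn : α * n ∈ s
  · rw [Set.indicator_of_mem hn, Set.indicator_of_mem (h n hn)]
  · rw [Set.indicator_of_notMem hn]; exact zero_le

lemma nuRNe_eq_smul (δ γ M : ℝ) (k : ℕ) (hγ : 0 ≤ γ) :
    nuRNe δ γ M k = ENNReal.ofReal γ • nuRNe δ 1 M k := by
  unfold nuRNe
  rw [← withDensity_smul' (ENNReal.ofReal γ) _ ENNReal.ofReal_ne_top]
  congr 1
  funext y
  simp only [Pi.smul_apply, smul_eq_mul]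
  by_cases hy : M < y
  · simp only [if_pos hy]
    rw [← ENNReal.ofReal_mul hγ]
    congr 1
    ring
  · simp [if_neg hy]

lemma nuRNe_one_univ_ne_top (δ M : ℝ) (k : ℕ) (hδ0 : 0 < δ) (hδ : δ ≤ 1/2)
    (hM : 0 < M) (hk : 3 ≤ k) : nuRNe δ 1 M k Set.univ ≠ ∞ := by
  unfold nuRNe
  rw [withDensity_apply _ MeasurableSet.univ, Measure.restrict_univ]
  set g : ℝ → ℝ := (Set.Ioi M).indicator (fun y => y ^ (-2 : ℝ)) with hg
  have hgint : Integrable g := by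
    rw [hg]
    exact IntegrableOn.integrable_indicator
      ((integrableOn_Ioi_rpow_iff hM).2 (by norm_num)) measurableSet_Ioi
  have hle : ∀ y : ℝ, ENNReal.ofReal (if M < y then
      ((1:ℝ) / y ^ 2 * Real.exp (δ * y)) / (Real.exp y + 1 / ((k : ℝ) - 1)) else 0)
      ≤ ENNReal.ofReal (g y) := by
    intro y
    by_cases hy : M < y
    · have hy0 : 0 < y := lt_trans hM hy
      have hk3 : (3:ℝ) ≤ (k:ℝ) := by exact_mod_cast hk
      have hkpos : (0:ℝ) < (k:ℝ) - 1 := by linarith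
      refine ENNReal.ofReal_le_ofReal ?_
      rw [if_pos hy, hg, Set.indicator_of_mem (Set.mem_Ioi.2 hy)]
      have h2 : y ^ (-2 : ℝ) = 1 / y ^ 2 := by
        rw [Real.rpow_neg hy0.le, one_div]
        congr 1
        rw [show (2:ℝ) = ((2:ℕ):ℝ) by norm_num, Real.rpow_natCast]
      rw [h2]
      have hinv : (0:ℝ) < 1 / ((k:ℝ) - 1) := by positivity
      calc ((1:ℝ) / y ^ 2 * Real.exp (δ * y)) / (Real.exp y + 1 / ((k : ℝ) - 1))
          ≤ ((1:ℝ) / y ^ 2 * Real.exp (δ * y)) / Real.exp y := by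
            gcongr
            linarith
        _ = 1 / y ^ 2 * Real.exp (δ * y - y) := by
            rw [Real.exp_sub]; ring
        _ ≤ 1 / y ^ 2 * 1 := by
            have hle0 : δ * y - y ≤ 0 := by nlinarith
            exact mul_le_mul_of_nonneg_left (Real.exp_le_one_iff.2 hle0) (by positivity)
        _ = 1 / y ^ 2 := mul_one _
    · rw [if_neg hy, hg, Set.indicator_of_notMem (by simpa using hy)]
  refine ne_top_of_le_ne_top hgint.lintegral_lt_top.ne (lintegral_mono hle)

open Filter in
/-- Fix `δ ∈ (0,1/2]`, `κ ∈ (0,1)`, `α > 0`, `M > 2/δ`, `β ≤ 1` and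
`k ≥ 3`.  For `σ, γ ∈ (0,1)` let
`ν̃_V¹ := (e^{γ+1−β}/log k) · ((y ↦ −log(e^{−y}+σ))_* law(α·Poisson(κ)))`.
Then for `M ≤ y₁ < y₂`, the liminf as `(σ,γ) → (0,0)` (from the right) of
`(ν̃_V¹ * μ_{−Z̃₁})([y₁,y₂])` is at least `(e^{−κ/2}/(2 log k)) P(α·Poisson(κ) ∈ (y₁,y₂))`. -/
theorem stmt12 (δ κ α M β : ℝ) (k : ℕ)
    (hδ0 : 0 < δ) (hδ : δ ≤ 1 / 2) (hκ : κ ∈ Ioo (0 : ℝ) 1) (hα : 0 < α)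
    (hM : 2 / δ < M) (hβ : β ≤ 1) (hk : 3 ≤ k)
    (y₁ y₂ : ℝ) (hy₁ : M ≤ y₁) (hy : y₁ < y₂) :
    Real.exp (-κ / 2) / (2 * Real.log k) *
        (scaledPoissonLaw κ α (Ioo y₁ y₂)).toReal
      ≤ Filter.liminf
          (fun p : ℝ × ℝ =>
            ((mconv
                (ENNReal.ofReal (Real.exp (p.2 + 1 - β) / Real.log k) •
                  Measure.map (fun y : ℝ => -Real.log (Real.exp (-y) + p.1))
                    (scaledPoissonLaw κ α))
                (Measure.map Neg.neg (Z1Law δ p.2 κ α M k))) (Icc y₁ y₂)).toReal)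
          ((nhdsWithin (0 : ℝ) (Ioi 0)) ×ˢ (nhdsWithin (0 : ℝ) (Ioi 0))) := by
  have hκ0 : 0 < κ := hκ.1
  have hk3 : (3:ℝ) ≤ (k:ℝ) := by exact_mod_cast hk
  have hlogk : 0 < Real.log k := Real.log_pos (by linarith)
  have hδpos : (0:ℝ) < 2 / δ := by positivity
  have hM0 : 0 < M := lt_trans hδpos hM
  have hy₁0 : 0 < y₁ := lt_of_lt_of_le hM0 hy₁
  have hPle1 : scaledPoissonLaw κ α Set.univ ≤ 1 := scaledPoissonLaw_univ_le_one κ α hκ0.le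
  have hPuniv : scaledPoissonLaw κ α Set.univ ≠ ∞ :=
    ne_top_of_le_ne_top ENNReal.one_ne_top hPle1
  have hJne : nuRNe δ 1 M k Set.univ ≠ ∞ := nuRNe_one_univ_ne_top δ M k hδ0 hδ hM0 hk
  set Jr : ℝ := (nuRNe δ 1 M k Set.univ).toReal with hJr
  set N₀ : ℕ := ⌊y₁ / α⌋₊ + 1 with hN₀
  have hN₀c : ((⌊y₁ / α⌋₊ : ℝ) + 1) = (N₀ : ℝ) := by rw [hN₀]; push_cast; ring
  have hN₀gt : y₁ < α * N₀ := by
    have h1 := Nat.lt_floor_add_one (y₁ / α)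
    rw [div_lt_iff₀ hα] at h1
    nlinarith [h1]
  set ε : ℝ := Real.exp (-y₁) - Real.exp (-(α * N₀)) with hε
  have hεpos : 0 < ε := by
    have h1 : Real.exp (-(α * N₀)) < Real.exp (-y₁) := Real.exp_lt_exp.2 (by linarith)
    simp only [hε]; linarith
  have hev1 : ∀ᶠ σ in nhdsWithin (0:ℝ) (Ioi 0), σ ∈ Ioo 0 ε :=
    Filter.eventually_of_mem (Ioo_mem_nhdsGT_of_mem (Set.left_mem_Ico.2 hεpos)) fun x hx => hx
  have hev2 : ∀ᶠ γ in nhdsWithin (0:ℝ) (Ioi 0), (0 < γ ∧ γ < 1) ∧ γ * Jr < Real.log 2 := by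
    have h1 : ∀ᶠ γ in nhdsWithin (0:ℝ) (Ioi 0), (0:ℝ) < γ ∧ γ < 1 :=
      Filter.eventually_of_mem (Ioo_mem_nhdsGT_of_mem (Set.left_mem_Ico.2 one_pos))
        fun x hx => hx
    have h2 : Filter.Tendsto (fun γ : ℝ => γ * Jr) (nhdsWithin 0 (Ioi 0)) (nhds 0) := by
      have h3 : Filter.Tendsto (fun γ : ℝ => γ * Jr) (nhds 0) (nhds (0 * Jr)) :=
        Filter.tendsto_id.mul_const Jr
      rw [zero_mul] at h3
      exact h3.mono_left nhdsWithin_le_nhds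
    exact h1.and (h2.eventually_lt_const (Real.log_pos (by norm_num)))
  have hev : ∀ᶠ p : ℝ × ℝ in (nhdsWithin (0:ℝ) (Ioi 0)) ×ˢ (nhdsWithin (0:ℝ) (Ioi 0)),
      Real.exp (-κ / 2) / (2 * Real.log k) * (scaledPoissonLaw κ α (Ioo y₁ y₂)).toReal ≤
      ((mconv
          (ENNReal.ofReal (Real.exp (p.2 + 1 - β) / Real.log k) •
            Measure.map (fun y : ℝ => -Real.log (Real.exp (-y) + p.1))
              (scaledPoissonLaw κ α))
          (Measure.map Neg.neg (Z1Law δ p.2 κ α M k))) (Icc y₁ y₂)).toReal ∧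
      ((mconv
          (ENNReal.ofReal (Real.exp (p.2 + 1 - β) / Real.log k) •
            Measure.map (fun y : ℝ => -Real.log (Real.exp (-y) + p.1))
              (scaledPoissonLaw κ α))
          (Measure.map Neg.neg (Z1Law δ p.2 κ α M k))) (Icc y₁ y₂)).toReal ≤
        Real.exp (2 - β) / Real.log k := by
    filter_upwards [hev1.prod_mk hev2] with p hp
    obtain ⟨σ, γ⟩ := p
    obtain ⟨hσ, ⟨hγ0, hγ1⟩, hγJ⟩ := hp
    dsimp only at hσ hγ0 hγJ ⊢
    set P : Measure ℝ := scaledPoissonLaw κ α with hPdef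
    set lam : ℝ := ((nuRNe δ γ M k) Set.univ).toReal with hlamdef
    have hscale : nuRNe δ γ M k Set.univ = ENNReal.ofReal γ * nuRNe δ 1 M k Set.univ := by
      rw [nuRNe_eq_smul δ γ M k hγ0.le, Measure.smul_apply, smul_eq_mul]
    have hlam_eq : lam = γ * Jr := by
      rw [hlamdef, hscale, ENNReal.toReal_mul, ENNReal.toReal_ofReal hγ0.le, hJr]
    have hlam0 : 0 ≤ lam := ENNReal.toReal_nonneg
    have hexp2 : (1:ℝ)/2 ≤ Real.exp (-lam) := by
      have h1 : Real.exp (-Real.log 2) ≤ Real.exp (-lam) := by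
        refine Real.exp_le_exp.2 ?_
        rw [hlam_eq]
        linarith
      rw [Real.exp_neg, Real.exp_log (by norm_num : (0:ℝ) < 2)] at h1
      linarith
    set μ' : Measure ℝ := (nuRNe δ γ M k Set.univ)⁻¹ • nuRNe δ γ M k with hμ'def
    have hμ' : μ' Set.univ ≤ 1 := inv_smul_univ_le_one _
    have hCle1 : compoundPoisson lam μ' Set.univ ≤ 1 :=
      compoundPoisson_univ_le_one lam hlam0 μ' hμ'
    have hCuniv : compoundPoisson lam μ' Set.univ ≠ ∞ :=
      ne_top_of_le_ne_top ENNReal.one_ne_top hCle1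
    haveI : IsFiniteMeasure (compoundPoisson lam μ') := ⟨hCuniv.lt_top⟩
    have hP₀le1 : scaledPoissonLaw (κ/2) α Set.univ ≤ 1 :=
      scaledPoissonLaw_univ_le_one _ α (by linarith)
    have hP₀univ : scaledPoissonLaw (κ/2) α Set.univ ≠ ∞ :=
      ne_top_of_le_ne_top ENNReal.one_ne_top hP₀le1
    have hZdef : Z1Law δ γ κ α M k
        = mconv (scaledPoissonLaw (κ/2) α) (compoundPoisson lam μ') := rfl
    have hZle1 : Z1Law δ γ κ α M k Set.univ ≤ 1 := by
      rw [hZdef, mconv_univ]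
      calc _ ≤ 1 * 1 := mul_le_mul' hCle1 hP₀le1
      _ = 1 := one_mul 1
    have hZuniv : Z1Law δ γ κ α M k Set.univ ≠ ∞ :=
      ne_top_of_le_ne_top ENNReal.one_ne_top hZle1
    have hZ0 : ENNReal.ofReal (Real.exp (-κ/2) * (1/2)) ≤ Z1Law δ γ κ α M k {0} := by
      have h1 : ENNReal.ofReal (Real.exp (-(κ/2))) ≤ scaledPoissonLaw (κ/2) α {0} :=
        le_scaledPoissonLaw_zero _ α
      have h2 : ENNReal.ofReal (Real.exp (-lam)) ≤ compoundPoisson lam μ' {0} :=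
        le_compoundPoisson_zero lam μ'
      calc ENNReal.ofReal (Real.exp (-κ/2) * (1/2))
          ≤ ENNReal.ofReal (Real.exp (-(κ/2)) * Real.exp (-lam)) := by
            refine ENNReal.ofReal_le_ofReal ?_
            rw [neg_div]
            exact mul_le_mul_of_nonneg_left hexp2 (Real.exp_nonneg _)
        _ = ENNReal.ofReal (Real.exp (-(κ/2))) * ENNReal.ofReal (Real.exp (-lam)) :=
            ENNReal.ofReal_mul (Real.exp_nonneg _)
        _ = ENNReal.ofReal (Real.exp (-lam)) * ENNReal.ofReal (Real.exp (-(κ/2))) :=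
            mul_comm _ _
        _ ≤ compoundPoisson lam μ' {0} * scaledPoissonLaw (κ/2) α {0} := mul_le_mul' h2 h1
        _ ≤ Z1Law δ γ κ α M k {0} := by
            rw [hZdef]; exact le_mconv _ _ (measurableSet_singleton 0)
    have hνZuniv : Measure.map Neg.neg (Z1Law δ γ κ α M k) Set.univ
        = Z1Law δ γ κ α M k Set.univ := by
      rw [Measure.map_apply measurable_neg MeasurableSet.univ, Set.preimage_univ]
    haveI : IsFiniteMeasure (Measure.map Neg.neg (Z1Law δ γ κ α M k)) :=
      ⟨by rw [hνZuniv]; exact hZuniv.lt_top⟩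
    have hνZ0 : Measure.map Neg.neg (Z1Law δ γ κ α M k) {0} = Z1Law δ γ κ α M k {0} := by
      rw [Measure.map_apply measurable_neg (measurableSet_singleton 0)]
      congr 1
      ext x
      simp [neg_eq_zero]
    set φ : ℝ → ℝ := fun y => -Real.log (Real.exp (-y) + σ) with hφdef
    have hφm : Measurable φ :=
      (Real.measurable_log.comp
        (((Real.continuous_exp.comp continuous_neg).measurable).add_const σ)).neg
    have hcompare : P (Ioo y₁ y₂) ≤ P (φ ⁻¹' Icc y₁ y₂) := by
      refine spl_compare κ α measurableSet_Ioo (hφm measurableSet_Icc) ?_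
      intro n hn
      obtain ⟨hn1, hn2⟩ := hn
      have hge : α * N₀ ≤ α * n := by
        have hfn : (N₀ : ℝ) ≤ (n:ℝ) := by
          have hfl : ⌊y₁/α⌋₊ < n :=
            (Nat.floor_lt (div_pos hy₁0 hα).le).2 ((div_lt_iff₀ hα).2 (by linarith))
          exact_mod_cast hfl
        nlinarith
      have ht0 : 0 < Real.exp (-(α*(n:ℝ))) + σ := add_pos (Real.exp_pos _) hσ.1
      simp only [Set.mem_preimage, Set.mem_Icc, hφdef]
      constructor
      · have h1 : Real.exp (-(α*(n:ℝ))) + σ < Real.exp (-y₁) := by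
          have h2 : Real.exp (-(α*(n:ℝ))) ≤ Real.exp (-(α*N₀)) :=
            Real.exp_le_exp.2 (by linarith)
          have hσε : σ < ε := hσ.2
          simp only [hε] at hσε
          linarith
        have h3 := Real.log_lt_log ht0 h1
        rw [Real.log_exp] at h3
        linarith
      · have h2 : Real.exp (-(α*(n:ℝ))) < Real.exp (-(α*(n:ℝ))) + σ := by linarith [hσ.1]
        have h3 := Real.log_lt_log (Real.exp_pos _) h2
        rw [Real.log_exp] at h3
        linarith
    set c : ℝ := Real.exp (γ + 1 - β) / Real.log k with hcdef
    have hc0 : 0 ≤ c := div_nonneg (Real.exp_nonneg _) hlogk.le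
    have hc1 : 1 / Real.log k ≤ c := by
      rw [hcdef]
      gcongr
      exact Real.one_le_exp (by linarith)
    have hIccM : MeasurableSet (Icc y₁ y₂) := measurableSet_Icc
    have hmapIcc : Measure.map φ P (Icc y₁ y₂) = P (φ ⁻¹' Icc y₁ y₂) :=
      Measure.map_apply hφm hIccM
    set L : ℝ≥0∞ := (mconv (ENNReal.ofReal c • Measure.map φ P)
        (Measure.map Neg.neg (Z1Law δ γ κ α M k))) (Icc y₁ y₂) with hLdef
    have hLeq : L = ENNReal.ofReal c * mconv (Measure.map φ P)
        (Measure.map Neg.neg (Z1Law δ γ κ α M k)) (Icc y₁ y₂) := by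
      rw [hLdef]
      exact mconv_smul_left _ _ _ hIccM
    have hlow : ENNReal.ofReal c *
        (ENNReal.ofReal (Real.exp (-κ/2) * (1/2)) * P (Ioo y₁ y₂)) ≤ L := by
      rw [hLeq]
      refine mul_le_mul_right ?_ _
      calc ENNReal.ofReal (Real.exp (-κ/2)*(1/2)) * P (Ioo y₁ y₂)
          ≤ Z1Law δ γ κ α M k {0} * P (φ ⁻¹' Icc y₁ y₂) := mul_le_mul' hZ0 hcompare
        _ = Measure.map Neg.neg (Z1Law δ γ κ α M k) {0} * Measure.map φ P (Icc y₁ y₂) := by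
            rw [hνZ0, hmapIcc]
        _ ≤ _ := le_mconv _ _ hIccM
    have hmapuniv : Measure.map φ P Set.univ = P Set.univ := by
      rw [Measure.map_apply hφm MeasurableSet.univ, Set.preimage_univ]
    have hB : c ≤ Real.exp (2 - β) / Real.log k := by
      rw [hcdef]
      gcongr <;> linarith
    have hBnn : 0 ≤ Real.exp (2 - β) / Real.log k :=
      div_nonneg (Real.exp_nonneg _) hlogk.le
    have hLB : L ≤ ENNReal.ofReal (Real.exp (2 - β) / Real.log k) := by
      have h5 : (ENNReal.ofReal c • Measure.map φ P) Set.univ ≤ ENNReal.ofReal c := by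
        rw [Measure.smul_apply, smul_eq_mul, hmapuniv]
        calc _ ≤ ENNReal.ofReal c * 1 := mul_le_mul_right hPle1 _
        _ = _ := mul_one _
      have h6 : Measure.map Neg.neg (Z1Law δ γ κ α M k) Set.univ ≤ 1 := by
        rw [hνZuniv]; exact hZle1
      calc L ≤ (mconv (ENNReal.ofReal c • Measure.map φ P)
            (Measure.map Neg.neg (Z1Law δ γ κ α M k))) Set.univ := by
            rw [hLdef]; exact measure_mono (subset_univ _)
        _ = Measure.map Neg.neg (Z1Law δ γ κ α M k) Set.univ *
            (ENNReal.ofReal c • Measure.map φ P) Set.univ := mconv_univ _ _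
        _ ≤ 1 * ENNReal.ofReal c := mul_le_mul' h6 h5
        _ = ENNReal.ofReal c := one_mul _
        _ ≤ ENNReal.ofReal (Real.exp (2 - β) / Real.log k) := ENNReal.ofReal_le_ofReal hB
    have hLne : L ≠ ∞ := ne_top_of_le_ne_top ENNReal.ofReal_ne_top hLB
    have hub : L.toReal ≤ Real.exp (2 - β) / Real.log k := by
      have h7 := ENNReal.toReal_mono ENNReal.ofReal_ne_top hLB
      rwa [ENNReal.toReal_ofReal hBnn] at h7
    have hfin : ENNReal.ofReal (c * (Real.exp (-κ/2) * (1/2))) * P (Ioo y₁ y₂) ≤ L := by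
      rw [ENNReal.ofReal_mul hc0, mul_assoc]
      exact hlow
    have htr := ENNReal.toReal_mono hLne hfin
    rw [ENNReal.toReal_mul,
      ENNReal.toReal_ofReal (mul_nonneg hc0 (by positivity))] at htr
    have hconst : Real.exp (-κ / 2) / (2 * Real.log k) ≤ c * (Real.exp (-κ/2) * (1/2)) := by
      have h1 : (1/Real.log k) * (Real.exp (-κ/2) * (1/2))
          ≤ c * (Real.exp (-κ/2) * (1/2)) :=
        mul_le_mul_of_nonneg_right hc1 (by positivity)
      have h2 : Real.exp (-κ / 2) / (2 * Real.log k)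
          = (1/Real.log k) * (Real.exp (-κ/2) * (1/2)) := by
        field_simp
      linarith
    refine ⟨?_, hub⟩
    calc Real.exp (-κ / 2) / (2 * Real.log k) * (P (Ioo y₁ y₂)).toReal
        ≤ (c * (Real.exp (-κ/2) * (1/2))) * (P (Ioo y₁ y₂)).toReal :=
          mul_le_mul_of_nonneg_right hconst ENNReal.toReal_nonneg
      _ ≤ L.toReal := htr
  refine le_liminf_of_le ?_ (hev.mono fun p h => h.1)
  exact IsCoboundedUnder.of_frequently_le ((hev.mono fun p h => h.2).frequently)
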